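/- The implicit nonnegativity constraint in the converse: for finite random variables W_c, W_1, S^n, Y^n with the per-letter decompositions I(W_1; Y^n | W_c) - I(W_1; S^n | W_c) = Σ_i [I(Ū_i; Y_i | V̄_i, X_{2,i}) - I(Ū_i; S_i | V̄_i, X_{2,i})] and I(W_c,W_1; Y^n) - I(W_c,W_1; S^n) ≤ Σ_i [I(Ū_i,V̄_i,X_{2,i}; Y_i) - I(Ū_i,V̄_i,X_{2,i}; S_i)], and with (W_c,W_1) independent of S^n, it follows that Σ_{i=1}^n [ I(V̄_i, X_{2,i}; Y_i) - I(V̄_i, X_{2,i}; S_i) ] ≥ 0. -/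

import Mathlib

/-! By the chain rule `I(Ū,V̄,X₂; ·) = I(V̄,X₂; ·) + I(Ū; · | V̄,X₂)` the right side of `h2` is the
target sum plus the right side of `h1`. Subtracting `h1` and using `I(W_c,W_1; ·) = I(W_c; ·) +
I(W_1; · | W_c)` leaves `I(W_c; Yⁿ) - I(W_c; Sⁿ)` below the target sum; the messages are independent
of the state, so `I(W_c; Sⁿ) = 0`, and `I(W_c; Yⁿ) ≥ 0` by Gibbs' inequality. -/

open Real BigOperators Finset Filter

section InfoTheory

variable {Ω : Type*} [Fintype Ω]

/-- `μ` is a probability mass function on the finite sample space `Ω`. -/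
def IsPMF (μ : Ω → ℝ) : Prop := (∀ ω, 0 ≤ μ ω) ∧ ∑ ω, μ ω = 1

/-- Probability that the random variable `X` takes the value `a`. -/
noncomputable def prob (μ : Ω → ℝ) {α : Type*} [DecidableEq α] (X : Ω → α) (a : α) : ℝ :=
  ∑ ω ∈ Finset.univ.filter (fun ω => X ω = a), μ ω

/-- Shannon entropy (base 2) of a finite-valued random variable. -/
noncomputable def Hent (μ : Ω → ℝ) {α : Type*} [Fintype α] [DecidableEq α] (X : Ω → α) : ℝ :=
  -∑ a : α, prob μ X a * Real.logb 2 (prob μ X a)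

/-- Conditional entropy `H(X | Z)`. -/
noncomputable def Hcond (μ : Ω → ℝ) {α β : Type*} [Fintype α] [DecidableEq α]
    [Fintype β] [DecidableEq β] (X : Ω → α) (Z : Ω → β) : ℝ :=
  Hent μ (fun ω => (X ω, Z ω)) - Hent μ Z

/-- Mutual information `I(X; Y)`. -/
noncomputable def mi (μ : Ω → ℝ) {α β : Type*} [Fintype α] [DecidableEq α]
    [Fintype β] [DecidableEq β] (X : Ω → α) (Y : Ω → β) : ℝ :=
  Hent μ X + Hent μ Y - Hent μ (fun ω => (X ω, Y ω))

/-- Conditional mutual information `I(X; Y | Z)`. -/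
noncomputable def cmi (μ : Ω → ℝ) {α β γ : Type*} [Fintype α] [DecidableEq α]
    [Fintype β] [DecidableEq β] [Fintype γ] [DecidableEq γ]
    (X : Ω → α) (Y : Ω → β) (Z : Ω → γ) : ℝ :=
  Hent μ (fun ω => (X ω, Z ω)) + Hent μ (fun ω => (Y ω, Z ω))
    - Hent μ (fun ω => (X ω, Y ω, Z ω)) - Hent μ Z

/-- Independence of two random variables. -/
def Indep (μ : Ω → ℝ) {α β : Type*} [DecidableEq α] [DecidableEq β]
    (X : Ω → α) (Y : Ω → β) : Prop :=
  ∀ a b, prob μ (fun ω => (X ω, Y ω)) (a, b) = prob μ X a * prob μ Y b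

/-- Conditional independence of `X` and `Y` given `Z`. -/
def CondIndep (μ : Ω → ℝ) {α β γ : Type*} [DecidableEq α] [DecidableEq β] [DecidableEq γ]
    (X : Ω → α) (Y : Ω → β) (Z : Ω → γ) : Prop :=
  ∀ a b c, prob μ (fun ω => (X ω, Y ω, Z ω)) (a, b, c) * prob μ Z c
    = prob μ (fun ω => (X ω, Z ω)) (a, c) * prob μ (fun ω => (Y ω, Z ω)) (b, c)

end InfoTheory

/-- Binary entropy function (base 2). -/
noncomputable def binEnt (x : ℝ) : ℝ := -(x * Real.logb 2 x) - (1 - x) * Real.logb 2 (1 - x)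

/-- Binary convolution `p * q = p(1-q) + q(1-p)`. -/
noncomputable def bconv (p q : ℝ) : ℝ := p * (1 - q) + q * (1 - p)

section Entropy

variable {Ω : Type*} [Fintype Ω]

lemma prob_nonneg {α : Type*} [DecidableEq α] {μ : Ω → ℝ} (hμ : IsPMF μ) (X : Ω → α) (a : α) :
    0 ≤ prob μ X a :=
  Finset.sum_nonneg fun ω _ => hμ.1 ω

lemma sum_prob {α : Type*} [Fintype α] [DecidableEq α] {μ : Ω → ℝ} (hμ : IsPMF μ) (X : Ω → α) :
    ∑ a, prob μ X a = 1 := by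
  rw [← hμ.2]
  exact Finset.sum_fiberwise_of_maps_to (fun ω _ => Finset.mem_univ _) μ

lemma prob_eq_sum_prob_pair_fst {α β : Type*} [Fintype β] [DecidableEq α] [DecidableEq β]
    (μ : Ω → ℝ) (X : Ω → α) (Y : Ω → β) (a : α) :
    prob μ X a = ∑ b, prob μ (fun ω => (X ω, Y ω)) (a, b) := by
  unfold prob
  rw [← Finset.sum_fiberwise _ Y μ]
  refine Finset.sum_congr rfl fun b _ => ?_
  simp only [Finset.filter_filter, Prod.mk.injEq]

lemma prob_eq_sum_prob_pair_snd {α β : Type*} [Fintype α] [DecidableEq α] [DecidableEq β]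
    (μ : Ω → ℝ) (X : Ω → α) (Y : Ω → β) (b : β) :
    prob μ Y b = ∑ a, prob μ (fun ω => (X ω, Y ω)) (a, b) := by
  unfold prob
  rw [← Finset.sum_fiberwise _ X μ]
  refine Finset.sum_congr rfl fun a _ => ?_
  simp only [Finset.filter_filter, Prod.mk.injEq, and_comm]

lemma prob_comp_of_injective {α β : Type*} [DecidableEq α] [DecidableEq β]
    (μ : Ω → ℝ) (X : Ω → α) {g : α → β} (hg : Function.Injective g) (a : α) :
    prob μ (fun ω => g (X ω)) (g a) = prob μ X a := by
  simp only [prob, hg.eq_iff]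

lemma prob_comp_eq_zero_of_notMem_range {α β : Type*} [DecidableEq β]
    (μ : Ω → ℝ) (X : Ω → α) {g : α → β} {b : β} (hb : b ∉ Set.range g) :
    prob μ (fun ω => g (X ω)) b = 0 := by
  rw [prob, Finset.filter_false_of_mem fun ω _ h => hb ⟨X ω, h⟩, Finset.sum_empty]

lemma Hent_comp_of_injective {α β : Type*} [Fintype α] [DecidableEq α] [Fintype β]
    [DecidableEq β] (μ : Ω → ℝ) (X : Ω → α) {g : α → β} (hg : Function.Injective g) :
    Hent μ (fun ω => g (X ω)) = Hent μ X := by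
  unfold Hent
  congr 1
  refine (Fintype.sum_of_injective g hg _ _ (fun b hb => ?_) fun a => ?_).symm
  · simp [prob_comp_eq_zero_of_notMem_range μ X hb]
  · rw [prob_comp_of_injective μ X hg]

lemma Hent_mul_log_two {α : Type*} [Fintype α] [DecidableEq α] (μ : Ω → ℝ) (X : Ω → α) :
    Hent μ X * log 2 = ∑ a, negMulLog (prob μ X a) := by
  have : log 2 ≠ 0 := by positivity
  simp only [Hent, logb, negMulLog, neg_mul, Finset.sum_neg_distrib, Finset.sum_mul]
  congr 1
  refine Finset.sum_congr rfl fun a _ => ?_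
  field_simp

lemma Hent_pair_of_indep {α β : Type*} [Fintype α] [DecidableEq α] [Fintype β]
    [DecidableEq β] {μ : Ω → ℝ} (hμ : IsPMF μ) {X : Ω → α} {Y : Ω → β} (h : Indep μ X Y) :
    Hent μ (fun ω => (X ω, Y ω)) = Hent μ X + Hent μ Y := by
  have : log 2 ≠ 0 := by positivity
  refine mul_right_cancel₀ this ?_
  simp only [add_mul, Hent_mul_log_two, Fintype.sum_prod_type, h _ _, negMulLog_mul,
    Finset.sum_add_distrib, ← Finset.sum_mul, ← Finset.mul_sum, sum_prob hμ, one_mul]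

lemma mi_eq_zero_of_indep {α β : Type*} [Fintype α] [DecidableEq α] [Fintype β]
    [DecidableEq β] {μ : Ω → ℝ} (hμ : IsPMF μ) {X : Ω → α} {Y : Ω → β} (h : Indep μ X Y) :
    mi μ X Y = 0 := by
  rw [mi, Hent_pair_of_indep hμ h]
  ring

lemma Indep.fst {α β γ : Type*} [Fintype β] [DecidableEq α] [DecidableEq β] [DecidableEq γ]
    {μ : Ω → ℝ} {X : Ω → α} {Y : Ω → β} {T : Ω → γ} (h : Indep μ (fun ω => (X ω, Y ω)) T) :
    Indep μ X T := by
  intro a c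
  have hrelabel : ∀ b, prob μ (fun ω => ((X ω, Y ω), T ω)) ((a, b), c)
      = prob μ (fun ω => ((X ω, T ω), Y ω)) ((a, c), b) := fun b =>
    prob_comp_of_injective μ (fun ω => ((X ω, T ω), Y ω))
      (g := fun p => ((p.1.1, p.2), p.1.2)) (fun _ _ => by simp [Prod.ext_iff]; tauto) ((a, c), b)
  rw [prob_eq_sum_prob_pair_fst μ X Y, Finset.sum_mul,
    prob_eq_sum_prob_pair_fst μ (fun ω => (X ω, T ω)) Y]
  exact Finset.sum_congr rfl fun b _ => by rw [← hrelabel, h]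

lemma mi_pair_eq_mi_fst_add_cmi {α β γ : Type*} [Fintype α] [DecidableEq α] [Fintype β]
    [DecidableEq β] [Fintype γ] [DecidableEq γ] (μ : Ω → ℝ) (X : Ω → α) (Z : Ω → γ)
    (A : Ω → β) :
    mi μ (fun ω => (X ω, Z ω)) A = mi μ X A + cmi μ Z A X := by
  have h1 := Hent_comp_of_injective μ (fun ω => (X ω, Z ω)) Prod.swap_injective
  have h2 := Hent_comp_of_injective μ (fun ω => (X ω, A ω)) Prod.swap_injective
  have h3 := Hent_comp_of_injective μ (fun ω => ((X ω, Z ω), A ω))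
    (g := fun p => (p.1.2, p.2, p.1.1)) (fun _ _ => by simp [Prod.ext_iff]; tauto)
  simp only [Prod.swap] at h1 h2 h3
  rw [mi, mi, cmi, ← h1, ← h2, ← h3]
  ring

lemma mi_pair_eq_mi_snd_add_cmi {α β γ : Type*} [Fintype α] [DecidableEq α] [Fintype β]
    [DecidableEq β] [Fintype γ] [DecidableEq γ] (μ : Ω → ℝ) (X : Ω → α) (Z : Ω → γ)
    (A : Ω → β) :
    mi μ (fun ω => (X ω, Z ω)) A = mi μ Z A + cmi μ X A Z := by
  have h1 := Hent_comp_of_injective μ (fun ω => (Z ω, A ω)) Prod.swap_injective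
  have h3 := Hent_comp_of_injective μ (fun ω => ((X ω, Z ω), A ω))
    (g := fun p => (p.1.1, p.2, p.1.2)) (fun _ _ => by simp [Prod.ext_iff]; tauto)
  simp only [Prod.swap] at h1 h3
  rw [mi, mi, cmi, ← h1, ← h3]
  ring

lemma sub_mul_le_mul_log_sub_mul_log {p x y : ℝ} (hp : 0 ≤ p) (hx : p ≤ x) (hy : p ≤ y) :
    p - x * y ≤ p * log p - p * log x - p * log y := by
  rcases hp.eq_or_lt with rfl | hp
  · simpa using mul_nonneg hx hy
  have hxy : 0 < x * y := mul_pos (hp.trans_le hx) (hp.trans_le hy)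
  have h := mul_le_mul_of_nonneg_left (log_le_sub_one_of_pos (div_pos hxy hp)) hp.le
  rw [log_div hxy.ne' hp.ne', log_mul (hp.trans_le hx).ne' (hp.trans_le hy).ne',
    mul_sub p (x * y / p), mul_div_cancel₀ _ hp.ne'] at h
  linarith

lemma mi_mul_log_two_eq_sum {α β : Type*} [Fintype α] [DecidableEq α] [Fintype β]
    [DecidableEq β] (μ : Ω → ℝ) (X : Ω → α) (Y : Ω → β) :
    mi μ X Y * log 2 = ∑ a, ∑ b, (prob μ (fun ω => (X ω, Y ω)) (a, b) *
      (log (prob μ (fun ω => (X ω, Y ω)) (a, b)) - log (prob μ X a) - log (prob μ Y b))) := by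
  set p := prob μ (fun ω => (X ω, Y ω))
  have hX : ∀ a, negMulLog (prob μ X a) = -∑ b, p (a, b) * log (prob μ X a) := fun a => by
    rw [negMulLog, neg_mul, ← Finset.sum_mul]
    nth_rw 1 [prob_eq_sum_prob_pair_fst μ X Y a]
  have hY : ∀ b, negMulLog (prob μ Y b) = -∑ a, p (a, b) * log (prob μ Y b) := fun b => by
    rw [negMulLog, neg_mul, ← Finset.sum_mul]
    nth_rw 1 [prob_eq_sum_prob_pair_snd μ X Y b]
  simp only [mi, sub_mul, add_mul, Hent_mul_log_two, hX, hY]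
  simp only [Fintype.sum_prod_type, negMulLog, neg_mul, Finset.sum_neg_distrib]
  rw [Finset.sum_comm (f := fun b a => p (a, b) * log (prob μ Y b))]
  simp only [mul_sub, Finset.sum_sub_distrib, p]
  ring

lemma mi_nonneg {α β : Type*} [Fintype α] [DecidableEq α] [Fintype β] [DecidableEq β]
    {μ : Ω → ℝ} (hμ : IsPMF μ) (X : Ω → α) (Y : Ω → β) : 0 ≤ mi μ X Y := by
  set p := prob μ (fun ω => (X ω, Y ω))
  have hgibbs : ∀ a b, p (a, b) - prob μ X a * prob μ Y b
      ≤ p (a, b) * (log (p (a, b)) - log (prob μ X a) - log (prob μ Y b)) := fun a b => by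
    rw [mul_sub, mul_sub]
    refine sub_mul_le_mul_log_sub_mul_log (prob_nonneg hμ _ _) ?_ ?_
    · rw [prob_eq_sum_prob_pair_fst μ X Y a]
      exact Finset.single_le_sum (fun b _ => prob_nonneg hμ _ (a, b)) (Finset.mem_univ b)
    · rw [prob_eq_sum_prob_pair_snd μ X Y b]
      exact Finset.single_le_sum (fun a _ => prob_nonneg hμ _ (a, b)) (Finset.mem_univ a)
  have htotal : ∑ a, ∑ b, (p (a, b) - prob μ X a * prob μ Y b) = 0 := by
    simp only [Finset.sum_sub_distrib, ← Finset.mul_sum, ← Finset.sum_mul, sum_prob hμ,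
      ← Fintype.sum_prod_type', p]
    simp
  have hlog2 : (0 : ℝ) < log 2 := by positivity
  refine nonneg_of_mul_nonneg_left ?_ hlog2
  rw [mi_mul_log_two_eq_sum, ← htotal]
  exact Finset.sum_le_sum fun a _ => Finset.sum_le_sum fun b _ => hgibbs a b

lemma mi_pair_sub_mi_pair {α β γ δ : Type*} [Fintype α] [DecidableEq α] [Fintype β]
    [DecidableEq β] [Fintype γ] [DecidableEq γ] [Fintype δ] [DecidableEq δ]
    (μ : Ω → ℝ) (U : Ω → α) (Z : Ω → γ) (A : Ω → β) (B : Ω → δ) :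
    mi μ (fun ω => (U ω, Z ω)) A - mi μ (fun ω => (U ω, Z ω)) B
      = (mi μ Z A - mi μ Z B) + (cmi μ U A Z - cmi μ U B Z) := by
  rw [mi_pair_eq_mi_snd_add_cmi, mi_pair_eq_mi_snd_add_cmi]
  ring

end Entropy

section Stmt10

variable {Ω σWc σW1 σS σY σX2 : Type*} [Fintype Ω]

/-- The past state sequence `S^{i-1}`. -/
def prefS {n : ℕ} (S : Fin n → Ω → σS) (i : Fin n) (ω : Ω) : Fin i.val → σS :=
  fun j => S ⟨j.val, lt_trans j.isLt i.isLt⟩ ω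

/-- The future output sequence `Y^n_{i+1}`. -/
def sufY {n : ℕ} (Y : Fin n → Ω → σY) (i : Fin n) (ω : Ω) : Fin (n - (i.val + 1)) → σY :=
  fun j => Y ⟨i.val + 1 + j.val, by have := j.isLt; have := i.isLt; omega⟩ ω

/-- The auxiliary random variable `V̄_i = (W_c, S^{i-1}, Y^n_{i+1})`. -/
def Vbar {n : ℕ} (Wc : Ω → σWc) (S : Fin n → Ω → σS) (Y : Fin n → Ω → σY) (i : Fin n)
    (ω : Ω) : σWc × (Fin i.val → σS) × (Fin (n - (i.val + 1)) → σY) :=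
  (Wc ω, prefS S i ω, sufY Y i ω)

/-- The auxiliary random variable `Ū_i = (W_1, V̄_i)`. -/
def Ubar {n : ℕ} (Wc : Ω → σWc) (W1 : Ω → σW1) (S : Fin n → Ω → σS) (Y : Fin n → Ω → σY)
    (i : Fin n) (ω : Ω) :
    σW1 × σWc × (Fin i.val → σS) × (Fin (n - (i.val + 1)) → σY) :=
  (W1 ω, Vbar Wc S Y i ω)

set_option synthInstance.maxHeartbeats 1000000 in
set_option synthInstance.maxSize 2048 in
set_option maxHeartbeats 1000000 in
theorem implicit_nonnegativity_constraint_general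
    [Fintype σWc] [DecidableEq σWc] [Fintype σW1] [DecidableEq σW1]
    [Fintype σS] [DecidableEq σS] [Fintype σY] [DecidableEq σY]
    [Fintype σX2] [DecidableEq σX2]
    (μ : Ω → ℝ) (hμ : IsPMF μ) (n : ℕ)
    (Wc : Ω → σWc) (W1 : Ω → σW1) (S : Fin n → Ω → σS) (Y : Fin n → Ω → σY)
    (X2 : Fin n → Ω → σX2)
    (hind : Indep μ (fun ω => (Wc ω, W1 ω)) (fun ω => fun i : Fin n => S i ω))
    (h1 : cmi μ W1 (fun ω => fun i : Fin n => Y i ω) Wc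
            - cmi μ W1 (fun ω => fun i : Fin n => S i ω) Wc
          = ∑ i : Fin n,
              (cmi μ (Ubar Wc W1 S Y i) (Y i) (fun ω => (Vbar Wc S Y i ω, X2 i ω))
                - cmi μ (Ubar Wc W1 S Y i) (S i) (fun ω => (Vbar Wc S Y i ω, X2 i ω))))
    (h2 : mi μ (fun ω => (Wc ω, W1 ω)) (fun ω => fun i : Fin n => Y i ω)
            - mi μ (fun ω => (Wc ω, W1 ω)) (fun ω => fun i : Fin n => S i ω)
          ≤ ∑ i : Fin n,
              (mi μ (fun ω => (Ubar Wc W1 S Y i ω, Vbar Wc S Y i ω, X2 i ω)) (Y i)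
                - mi μ (fun ω => (Ubar Wc W1 S Y i ω, Vbar Wc S Y i ω, X2 i ω)) (S i))) :
    0 ≤ ∑ i : Fin n,
          (mi μ (fun ω => (Vbar Wc S Y i ω, X2 i ω)) (Y i)
            - mi μ (fun ω => (Vbar Wc S Y i ω, X2 i ω)) (S i)) := by
  have hsplit := Finset.sum_congr rfl fun i (_ : i ∈ Finset.univ) =>
    mi_pair_sub_mi_pair μ (Ubar Wc W1 S Y i) (fun ω => (Vbar Wc S Y i ω, X2 i ω)) (Y i) (S i)
  rw [hsplit, Finset.sum_add_distrib, ← h1, mi_pair_eq_mi_fst_add_cmi, mi_pair_eq_mi_fst_add_cmi,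
    mi_eq_zero_of_indep hμ hind.fst] at h2
  linarith [mi_nonneg hμ Wc (fun ω => fun i : Fin n => Y i ω)]

set_option synthInstance.maxHeartbeats 1000000 in
set_option synthInstance.maxSize 2048 in
set_option maxHeartbeats 1000000 in
/-- The implicit nonnegativity constraint in the converse proof. -/
theorem implicit_nonnegativity_constraint
    [Fintype σWc] [DecidableEq σWc] [Fintype σW1] [DecidableEq σW1]
    [Fintype σS] [DecidableEq σS] [Fintype σY] [DecidableEq σY]
    [Fintype σX2] [DecidableEq σX2]
    (μ : Ω → ℝ) (hμ : IsPMF μ) (n : ℕ)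
    (Wc : Ω → σWc) (W1 : Ω → σW1) (S : Fin n → Ω → σS) (Y : Fin n → Ω → σY)
    (X2 : Fin n → Ω → σX2)
    (hdet : ∀ i : Fin n, ∃ f : σWc × (Fin i.val → σS) → σX2,
      ∀ ω, X2 i ω = f (Wc ω, prefS S i ω))
    (hind : Indep μ (fun ω => (Wc ω, W1 ω)) (fun ω => fun i : Fin n => S i ω))
    (h1 : cmi μ W1 (fun ω => fun i : Fin n => Y i ω) Wc
            - cmi μ W1 (fun ω => fun i : Fin n => S i ω) Wc
          = ∑ i : Fin n,
              (cmi μ (Ubar Wc W1 S Y i) (Y i) (fun ω => (Vbar Wc S Y i ω, X2 i ω))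
                - cmi μ (Ubar Wc W1 S Y i) (S i) (fun ω => (Vbar Wc S Y i ω, X2 i ω))))
    (h2 : mi μ (fun ω => (Wc ω, W1 ω)) (fun ω => fun i : Fin n => Y i ω)
            - mi μ (fun ω => (Wc ω, W1 ω)) (fun ω => fun i : Fin n => S i ω)
          ≤ ∑ i : Fin n,
              (mi μ (fun ω => (Ubar Wc W1 S Y i ω, Vbar Wc S Y i ω, X2 i ω)) (Y i)
                - mi μ (fun ω => (Ubar Wc W1 S Y i ω, Vbar Wc S Y i ω, X2 i ω)) (S i))) :
    0 ≤ ∑ i : Fin n,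
          (mi μ (fun ω => (Vbar Wc S Y i ω, X2 i ω)) (Y i)
            - mi μ (fun ω => (Vbar Wc S Y i ω, X2 i ω)) (S i)) :=
  implicit_nonnegativity_constraint_general μ hμ n Wc W1 S Y X2 hind h1 h2

end Stmt10
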